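/- Let S be the three-element partial order {p₀, p₁, q} in which q < p₀, q < p₁, and p₀, p₁ are incomparable. Let P = WithTop (S × Finset ℕ), where S × Finset ℕ carries the product order (Finset ℕ ordered by inclusion) and the added top element ⊤ is above everything; the bottom element of P is ⊥ = (q, ∅). Say that b is a complement of a in P if b ≠ a, there is no c with a ≤ c, b ≤ c and c < ⊤, and there is no c with c ≤ a, c ≤ b and ⊥ < c. Then a non-top element (u, D) of P has a complement if and only if u ≠ q or D = ∅. In particular, (p₀, D) has complement (p₁, ∅) for every D, and (q, D) has no complement whenever D ≠ ∅. -/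

import Mathlib

/-- The three-element poset `{p₀, p₁, q}` with `q < p₀`, `q < p₁`. -/
inductive S
  | p0 | p1 | q
deriving DecidableEq

instance : PartialOrder S where
  le a b := a = b ∨ a = S.q
  le_refl a := Or.inl rfl
  le_trans a b c hab hbc := by
    rcases hab with rfl | rfl
    · exact hbc
    · exact Or.inr rfl
  le_antisymm a b hab hba := by
    rcases hab with rfl | rfl
    · rfl
    · rcases hba with rfl | rfl <;> rfl

/-- The bounded poset `P = WithTop (S × Finset ℕ)`, with bottom element `(q, ∅)`. -/
abbrev P := WithTop (S × Finset ℕ)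

/-- The bottom element of `P`. -/
def Pbot : P := ((S.q, (∅ : Finset ℕ)) : S × Finset ℕ)

/-- `b` is a complement of `a` in `P`: `b ≠ a`, they have no common upper bound
below `⊤` and no common lower bound above `(q, ∅)`. -/
def IsComplement (a b : P) : Prop :=
  b ≠ a ∧ (¬ ∃ c : P, a ≤ c ∧ b ≤ c ∧ c < ⊤) ∧ (¬ ∃ c : P, c ≤ a ∧ c ≤ b ∧ Pbot < c)

namespace S

theorem eq_of_le_of_ne_q {u w : S} (hu : u ≠ S.q) (h : u ≤ w) : u = w :=
  h.resolve_right hu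

theorem eq_q_of_le_of_le {u v w : S} (huv : u ≠ v) (hwu : w ≤ u) (hwv : w ≤ v) : w = S.q := by
  rcases hwu with rfl | h
  · exact hwv.resolve_left huv
  · exact h

theorem exists_ne_ne_q (u : S) : ∃ v : S, v ≠ u ∧ v ≠ S.q := by
  cases u
  exacts [⟨S.p1, by decide, by decide⟩, ⟨S.p0, by decide, by decide⟩,
    ⟨S.p0, by decide, by decide⟩]

end S

theorem WithTop.exists_upperBound_lt_top_iff {α : Type*} [Preorder α] {a b : α} :
    (∃ c : WithTop α, ↑a ≤ c ∧ ↑b ≤ c ∧ c < ⊤) ↔ ∃ c : α, a ≤ c ∧ b ≤ c := by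
  simp [WithTop.lt_top_iff_ne_top, WithTop.ne_top_iff_exists]

theorem WithTop.exists_lowerBound_iff {α : Type*} [Preorder α] {a b : α} {p : WithTop α → Prop} :
    (∃ c : WithTop α, c ≤ ↑a ∧ c ≤ ↑b ∧ p c) ↔ ∃ c : α, c ≤ a ∧ c ≤ b ∧ p c := by
  constructor
  · rintro ⟨c, hca, hcb, hc⟩
    lift c to α using (hca.trans_lt (WithTop.coe_lt_top a)).ne
    exact ⟨c, WithTop.coe_le_coe.mp hca, WithTop.coe_le_coe.mp hcb, hc⟩
  · rintro ⟨c, hca, hcb, hc⟩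
    exact ⟨c, WithTop.coe_le_coe.mpr hca, WithTop.coe_le_coe.mpr hcb, hc⟩

theorem isComplement_coe_iff {a b : S × Finset ℕ} :
    IsComplement a b ↔ b ≠ a ∧ (¬ ∃ c, a ≤ c ∧ b ≤ c) ∧
      ¬ ∃ c, c ≤ a ∧ c ≤ b ∧ ((S.q, ∅) : S × Finset ℕ) < c := by
  simp only [IsComplement, Pbot, WithTop.exists_upperBound_lt_top_iff,
    WithTop.exists_lowerBound_iff, WithTop.coe_lt_coe, ne_eq, WithTop.coe_eq_coe]

theorem isComplement_mk_mk {u v : S} (huv : u ≠ v) (hu : u ≠ S.q) (hv : v ≠ S.q) (D : Finset ℕ) :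
    IsComplement (((u, D) : S × Finset ℕ) : P) (((v, ∅) : S × Finset ℕ) : P) := by
  refine isComplement_coe_iff.mpr ⟨fun h ↦ huv (Prod.ext_iff.mp h).1.symm, ?_, ?_⟩
  · rintro ⟨⟨w, E⟩, huw, hvw⟩
    exact huv ((S.eq_of_le_of_ne_q hu huw.1).trans (S.eq_of_le_of_ne_q hv hvw.1).symm)
  · rintro ⟨⟨w, E⟩, hwu, hwv, hlt⟩
    have hw : w = S.q := S.eq_q_of_le_of_le huv hwu.1 hwv.1
    have hE : E = ∅ := Finset.subset_empty.mp hwv.2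
    subst hw hE
    exact hlt.false

theorem isComplement_Pbot_top : IsComplement Pbot ⊤ :=
  ⟨WithTop.top_ne_coe, fun ⟨_, _, htc, hct⟩ ↦ hct.not_ge htc,
    fun ⟨_, hca, _, hbc⟩ ↦ hbc.not_ge hca⟩

theorem exists_isComplement_of_ne_q {u : S} (hu : u ≠ S.q) (D : Finset ℕ) :
    ∃ b : P, IsComplement (((u, D) : S × Finset ℕ) : P) b := by
  obtain ⟨v, hvu, hv⟩ := S.exists_ne_ne_q u
  exact ⟨_, isComplement_mk_mk hvu.symm hu hv D⟩

/- Against `⊤`, the element `(q, D)` itself is a lower bound above `(q, ∅)`; against `(v, E)`,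
the pair `(v, D ∪ E)` is an upper bound below `⊤`. -/
theorem not_exists_isComplement_q {D : Finset ℕ} (hD : D ≠ ∅) :
    ¬ ∃ b : P, IsComplement (((S.q, D) : S × Finset ℕ) : P) b := by
  rintro ⟨b, -, hupper, hlower⟩
  induction b using WithTop.recTopCoe with
  | top =>
    refine hlower ⟨_, le_rfl, le_top, WithTop.coe_lt_coe.mpr ?_⟩
    exact Prod.mk_lt_mk_of_le_of_lt le_rfl
      (Finset.empty_ssubset.mpr (Finset.nonempty_of_ne_empty hD))
  | coe b =>
    obtain ⟨v, E⟩ := b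
    exact hupper ⟨((v, D ∪ E) : S × Finset ℕ),
      WithTop.coe_le_coe.mpr ⟨Or.inr rfl, Finset.subset_union_left⟩,
      WithTop.coe_le_coe.mpr ⟨le_rfl, Finset.subset_union_right⟩, WithTop.coe_lt_top _⟩

/-- a non-top element `(u, D)` of `P` has a complement iff `u ≠ q` or
`D = ∅`; in particular `(p₀, D)` has complement `(p₁, ∅)`, and `(q, D)` has no
complement whenever `D ≠ ∅`. -/
theorem stmt_8 :
    (∀ (u : S) (D : Finset ℕ),
      (∃ b : P, IsComplement (((u, D) : S × Finset ℕ) : P) b) ↔ (u ≠ S.q ∨ D = ∅)) ∧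
    (∀ D : Finset ℕ,
      IsComplement (((S.p0, D) : S × Finset ℕ) : P) (((S.p1, (∅ : Finset ℕ)) : S × Finset ℕ) : P)) ∧
    (∀ D : Finset ℕ, D ≠ ∅ →
      ¬ ∃ b : P, IsComplement (((S.q, D) : S × Finset ℕ) : P) b) := by
  refine ⟨fun u D ↦ ⟨?_, ?_⟩, isComplement_mk_mk (by decide) (by decide) (by decide),
    fun _ ↦ not_exists_isComplement_q⟩
  · intro hb
    by_contra! h
    obtain ⟨rfl, hD⟩ := h
    exact not_exists_isComplement_q hD.ne_empty hb
  · rintro (hu | rfl)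
    · exact exists_isComplement_of_ne_q hu D
    · by_cases hu : u = S.q
      · exact hu ▸ ⟨⊤, isComplement_Pbot_top⟩
      · exact exists_isComplement_of_ne_q hu ∅
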